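/- arXiv:2011.07515 — 2 statements merged into one kernel-verified Lean document; each statement's English description precedes it below -/
import Mathlib

section
/- If m3, l1, l2, a > 0 and θ1, θ2, θ3 ∈ (−π/2, π/2) with |θ2+θ3| < π/2 and |θ1−θ3| < π/2, then the unique solution (x1, x2, x3) ∈ ℝ³ of the linear system (m2+m3)·l1·cos θ1·x1 + m2·l2·cos θ2·x2 − (m2+m3/2)·a·sin θ3·x3 = 0, l1·cos θ1·x1 + l2·cos θ2·x2 − a·sin θ3·x3 = 0, l1·sin θ1·x1 − l2·sin θ2·x2 + a·cos θ3·x3 = 0 is x1 = x2 = x3 = 0. -/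
theorem drone_bar_unique_solution (m2 m3 l1 l2 a θ1 θ2 θ3 : ℝ)
    (hm2 : 0 ≤ m2) (hm3 : 0 < m3) (hl1 : 0 < l1) (hl2 : 0 < l2) (ha : 0 < a)
    (h1 : θ1 ∈ Set.Ioo (-(Real.pi / 2)) (Real.pi / 2))
    (h2 : θ2 ∈ Set.Ioo (-(Real.pi / 2)) (Real.pi / 2))
    (h3 : θ3 ∈ Set.Ioo (-(Real.pi / 2)) (Real.pi / 2))
    (h23 : |θ2 + θ3| < Real.pi / 2) (h13 : |θ1 - θ3| < Real.pi / 2)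
    (x1 x2 x3 : ℝ)
    (he1 : (m2 + m3) * l1 * Real.cos θ1 * x1 + m2 * l2 * Real.cos θ2 * x2
        - (m2 + m3 / 2) * a * Real.sin θ3 * x3 = 0)
    (he2 : l1 * Real.cos θ1 * x1 + l2 * Real.cos θ2 * x2 - a * Real.sin θ3 * x3 = 0)
    (he3 : l1 * Real.sin θ1 * x1 - l2 * Real.sin θ2 * x2 + a * Real.cos θ3 * x3 = 0) :
    x1 = 0 ∧ x2 = 0 ∧ x3 = 0 := by
  have hc1 : 0 < Real.cos θ1 := Real.cos_pos_of_mem_Ioo h1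
  have hc2 : 0 < Real.cos θ2 := Real.cos_pos_of_mem_Ioo h2
  have hc3 : 0 < Real.cos θ3 := Real.cos_pos_of_mem_Ioo h3
  have h23' : 0 < Real.cos (θ2 + θ3) :=
    Real.cos_pos_of_mem_Ioo ⟨(abs_lt.mp h23).1, (abs_lt.mp h23).2⟩
  have h13' : 0 < Real.cos (θ1 - θ3) :=
    Real.cos_pos_of_mem_Ioo ⟨(abs_lt.mp h13).1, (abs_lt.mp h13).2⟩
  have e4 : l1 * Real.cos θ1 * x1 = a / 2 * Real.sin θ3 * x3 := by
    have h : m3 * (l1 * Real.cos θ1 * x1 - a / 2 * Real.sin θ3 * x3) = 0 := by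
      linear_combination he1 - m2 * he2
    have := mul_eq_zero.mp h
    rcases this with h' | h'
    · exact absurd h' (ne_of_gt hm3)
    · linarith
  have e5 : l2 * Real.cos θ2 * x2 = a / 2 * Real.sin θ3 * x3 := by
    linear_combination he2 - e4
  have key : a * x3 * (Real.cos θ2 * Real.cos (θ1 - θ3) + Real.cos θ1 * Real.cos (θ2 + θ3)) = 0 := by
    rw [Real.cos_sub, Real.cos_add]
    linear_combination 2 * Real.cos θ1 * Real.cos θ2 * he3
      - 2 * Real.sin θ1 * Real.cos θ2 * e4 + 2 * Real.sin θ2 * Real.cos θ1 * e5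
  have hb : 0 < Real.cos θ2 * Real.cos (θ1 - θ3) + Real.cos θ1 * Real.cos (θ2 + θ3) := by
    positivity
  have hx3 : x3 = 0 := by
    rcases mul_eq_zero.mp key with h' | h'
    · rcases mul_eq_zero.mp h' with h'' | h''
      · exact absurd h'' (ne_of_gt ha)
      · exact h''
    · exact absurd h' (ne_of_gt hb)
  have hx1 : x1 = 0 := by
    have : l1 * Real.cos θ1 * x1 = 0 := by rw [e4, hx3]; ring
    rcases mul_eq_zero.mp this with h' | h'
    · exact absurd h' (ne_of_gt (mul_pos hl1 hc1))
    · exact h'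
  have hx2 : x2 = 0 := by
    have : l2 * Real.cos θ2 * x2 = 0 := by rw [e5, hx3]; ring
    rcases mul_eq_zero.mp this with h' | h'
    · exact absurd h' (ne_of_gt (mul_pos hl2 hc2))
    · exact h'
  exact ⟨hx1, hx2, hx3⟩
end

section
/- Let V: [0,∞) → ℝ be continuously differentiable with V'(t) ≤ 0 for all t, and suppose e: [0,∞) → ℝ is continuous with e(0)² < ρ and V(t) ≥ σ·e(t)²/(2(ρ − e(t)²)) − C for some constant C whenever e(t)² < ρ. Then e(t)² < ρ for all t ≥ 0. -/
theorem barrier_invariance (σ ρ C : ℝ) (hσ : 0 < σ) (hρ : 0 < ρ) (hC : 0 ≤ C)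
    (V V' : ℝ → ℝ) (e : ℝ → ℝ)
    (hV : ∀ t, 0 ≤ t → HasDerivAt V (V' t) t)
    (hV'cont : ContinuousOn V' (Set.Ici 0))
    (hV'le : ∀ t, 0 ≤ t → V' t ≤ 0)
    (he : Continuous e)
    (he0 : (e 0) ^ 2 < ρ)
    (hdom : ∀ t, 0 ≤ t → (e t) ^ 2 < ρ →
      σ * (e t) ^ 2 / (2 * (ρ - (e t) ^ 2)) - C ≤ V t) :
    ∀ t, 0 ≤ t → (e t) ^ 2 < ρ := by
  -- V is antitone on [0,∞)
  have hVanti : AntitoneOn V (Set.Ici (0:ℝ)) := by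
    apply antitoneOn_of_deriv_nonpos (convex_Ici 0)
    · exact fun x hx => (hV x hx).continuousAt.continuousWithinAt
    · intro x hx
      rw [interior_Ici] at hx
      exact (hV x hx.le).differentiableAt.differentiableWithinAt
    · intro x hx
      rw [interior_Ici] at hx
      rw [(hV x hx.le).deriv]
      exact hV'le x hx.le
  have hVle : ∀ s, 0 ≤ s → V s ≤ V 0 :=
    fun s hs => hVanti (Set.self_mem_Ici) hs hs
  intro t ht
  by_contra hcon
  push_neg at hcon
  set f : ℝ → ℝ := fun s => (e s) ^ 2 with hf
  have hfc : Continuous f := by continuity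
  set S : Set ℝ := {s | s ∈ Set.Icc 0 t ∧ ρ ≤ f s} with hS
  have hSne : S.Nonempty := ⟨t, ⟨ht, le_refl t⟩, hcon⟩
  have hSbdd : BddBelow S := ⟨0, fun s hs => hs.1.1⟩
  have hSclosed : IsClosed S := by
    have : S = Set.Icc 0 t ∩ {s | ρ ≤ f s} := rfl
    rw [this]
    exact isClosed_Icc.inter (isClosed_le continuous_const hfc)
  set t₀ : ℝ := sInf S with ht₀
  have ht₀S : t₀ ∈ S := hSclosed.csInf_mem hSne hSbdd
  have ht₀pos : 0 < t₀ := by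
    rcases lt_or_ge 0 t₀ with h | h
    · exact h
    · exfalso
      have h0 : t₀ = 0 := le_antisymm h ht₀S.1.1
      have := ht₀S.2
      rw [h0] at this
      exact absurd he0 (not_lt.mpr this)
  have hlt : ∀ s, 0 ≤ s → s < t₀ → f s < ρ := by
    intro s hs hst
    by_contra hge
    push_neg at hge
    have hsS : s ∈ S := ⟨⟨hs, hst.le.trans ht₀S.1.2⟩, hge⟩
    exact absurd (csInf_le hSbdd hsS) (not_le.mpr hst)
  -- pick M' bound
  set M : ℝ := max (V 0 + C) 1 with hM
  have hMpos : 0 < M := lt_of_lt_of_le one_pos (le_max_right _ _)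
  set ε : ℝ := min (ρ/2) (σ * ρ / (4 * M)) with hε
  have hεpos : 0 < ε := lt_min (by linarith) (by positivity)
  -- continuity at t₀ gives s close by
  obtain ⟨δ, hδpos, hδ⟩ := Metric.continuousAt_iff.mp (hfc.continuousAt (x := t₀)) ε hεpos
  set s : ℝ := t₀ - min (δ/2) (t₀/2) with hs
  have hmin : 0 < min (δ/2) (t₀/2) := lt_min (by linarith) (by linarith)
  have hs0 : 0 ≤ s := by
    have : min (δ/2) (t₀/2) ≤ t₀/2 := min_le_right _ _
    simp only [hs]; linarith
  have hst₀ : s < t₀ := by simp only [hs]; linarith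
  have hdist : dist s t₀ < δ := by
    rw [Real.dist_eq]
    have h1 : min (δ/2) (t₀/2) ≤ δ/2 := min_le_left _ _
    rw [abs_of_nonpos (by simp only [hs]; linarith)]
    simp only [hs]; linarith
  have hclose := hδ hdist
  rw [Real.dist_eq] at hclose
  have hfs_lt : f s < ρ := hlt s hs0 hst₀
  have hfρ : ρ ≤ f t₀ := ht₀S.2
  have hfs_gt : ρ - ε < f s := by
    have := abs_lt.mp hclose
    linarith [this.1]
  have hερ2 : ε ≤ ρ/2 := min_le_left _ _
  have hεσ : ε ≤ σ * ρ / (4 * M) := min_le_right _ _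
  have hfs_half : ρ/2 < f s := by linarith
  have hgap : 0 < ρ - f s := by linarith
  have hgap_lt : ρ - f s < σ * ρ / (4 * M) := by linarith
  -- barrier bound
  have hbar : σ * f s / (2 * (ρ - f s)) - C ≤ V s := hdom s hs0 hfs_lt
  have hVs : V s ≤ V 0 := hVle s hs0
  have hbig : M < σ * f s / (2 * (ρ - f s)) := by
    rw [lt_div_iff₀ (by linarith)]
    have h1 : (ρ - f s) * M < σ * ρ / 4 := by
      rw [lt_div_iff₀ (by norm_num : (0:ℝ) < 4)] at *
      calc (ρ - f s) * M * 4 < (σ * ρ / (4 * M)) * M * 4 := by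
            apply mul_lt_mul_of_pos_right _ (by norm_num)
            exact mul_lt_mul_of_pos_right hgap_lt hMpos
        _ = σ * ρ := by field_simp
    nlinarith [hfs_half, hσ.le, hgap]
  have hMV : V 0 + C ≤ M := le_max_left _ _
  linarith
end
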